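/- Let Σ be the ranked alphabet with constants ♯, $, ♭, a unary symbol f, and binary symbols g, h, and let R over Σ consist of the rules ♯ → f(♯), ♯ → ♭, $ → f($), $ → ♭, and g(x₁, x₁) → h(x₁, x₁). Then R*_Σ({g(♯, $)}) ∩ {h(t₁, t₂) : t₁, t₂ ∈ T_Σ} = {h(fᵏ(♭), fᵏ(♭)) : k ≥ 0}, and consequently R*_Σ({g(♯, $)}) is not a recognizable tree language over Σ. -/

import Mathlib

set_option autoImplicit false

/-!
Basic framework: ranked alphabets, terms, term rewrite systems,
bottom-up tree automata, recognizability.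
A ranked alphabet is modelled by a (finite) type `σ` together with an
arity function `ar : σ → ℕ`.  `Tm.var n` denotes the variable `x_{n+1}`,
so `T_Σ(X_m)` corresponds to terms all of whose variables satisfy `n < m`,
and ground terms (`T_Σ`) are terms satisfying `Tm.Ground`.
-/

/-- Terms over the ranked alphabet `(σ, ar)` with variables `x₁, x₂, …`
(`var n` is `x_{n+1}`). -/
inductive Tm (σ : Type) (ar : σ → ℕ) : Type
  | var : ℕ → Tm σ ar
  | app : (f : σ) → (Fin (ar f) → Tm σ ar) → Tm σ ar

namespace Tm

variable {σ γ : Type} {ar : σ → ℕ} {arγ : γ → ℕ}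

/-- Application of a substitution `θ` (assigning a term to each variable). -/
def subst (θ : ℕ → Tm σ ar) : Tm σ ar → Tm σ ar
  | var n => θ n
  | app f ts => app f fun i => (ts i).subst θ

/-- A term is ground if it contains no variables. -/
def Ground : Tm σ ar → Prop
  | var _ => False
  | app _ ts => ∀ i, (ts i).Ground

/-- The set of (indices of) variables occurring in a term. -/
def vars : Tm σ ar → Set ℕ
  | var n => {n}
  | app _ ts => ⋃ i, (ts i).vars

/-- Number of occurrences of the variable `x_{n+1}` in a term. -/
def count (n : ℕ) : Tm σ ar → ℕ
  | var m => if m = n then 1 else 0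
  | app _ ts => ∑ i, (ts i).count n

/-- A term is linear if every variable occurs at most once in it. -/
def Linear (t : Tm σ ar) : Prop := ∀ n, t.count n ≤ 1

/-- The symbol `s` occurs in the term. -/
def symOccurs (s : σ) : Tm σ ar → Prop
  | var _ => False
  | app f ts => f = s ∨ ∃ i, (ts i).symOccurs s

/-- Height of a term (constants and variables have height 0). -/
def height : Tm σ ar → ℕ
  | var _ => 0
  | app _ ts => Finset.univ.sup fun i => (ts i).height + 1

/-- Renaming of the alphabet along an arity-preserving map. -/
def map (ι : σ → γ) (h : ∀ s, arγ (ι s) = ar s) : Tm σ ar → Tm γ arγ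
  | var n => var n
  | app f ts => app (ι f) fun i => (ts (Fin.cast (h f) i)).map ι h

/-- The subterm of `t` at a position (a list of argument indices), if defined. -/
def subAt : Tm σ ar → List ℕ → Option (Tm σ ar)
  | t, [] => some t
  | var _, _ :: _ => none
  | app f ts, i :: p => if h : i < ar f then (ts ⟨i, h⟩).subAt p else none

/-- Subterm relation. -/
inductive Subtm : Tm σ ar → Tm σ ar → Prop
  | refl (t : Tm σ ar) : Subtm t t
  | app {s : Tm σ ar} {f : σ} {ts : Fin (ar f) → Tm σ ar} (i : Fin (ar f)) :
      Subtm s (ts i) → Subtm s (Tm.app f ts)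

end Tm

section Rewriting

variable {σ γ : Type} {ar : σ → ℕ} {arγ : γ → ℕ}

/-- One-step rewriting by the rule set `R`: apply a rule under a substitution
at the root, or rewrite inside one argument. -/
inductive Step (R : Set (Tm σ ar × Tm σ ar)) : Tm σ ar → Tm σ ar → Prop
  | rule {l r : Tm σ ar} (θ : ℕ → Tm σ ar) (h : (l, r) ∈ R) :
      Step R (l.subst θ) (r.subst θ)
  | congr {f : σ} {ts : Fin (ar f) → Tm σ ar} {t' : Tm σ ar} (i : Fin (ar f)) :
      Step R (ts i) t' → Step R (Tm.app f ts) (Tm.app f (Function.update ts i t'))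

/-- Many-step rewriting: reflexive-transitive closure of `Step`. -/
def Steps (R : Set (Tm σ ar × Tm σ ar)) : Tm σ ar → Tm σ ar → Prop :=
  Relation.ReflTransGen (Step R)

/-- `R` is a term rewrite system: finitely many rules, and every variable of a
right-hand side occurs in the corresponding left-hand side. -/
def IsTRS (R : Set (Tm σ ar × Tm σ ar)) : Prop :=
  R.Finite ∧ ∀ lr ∈ R, lr.2.vars ⊆ lr.1.vars

/-- The set `R*(L)` of descendants of members of `L`. -/
def Desc (R : Set (Tm σ ar × Tm σ ar)) (L : Set (Tm σ ar)) : Set (Tm σ ar) :=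
  {p | ∃ q ∈ L, Steps R q p}

/-- `R` is terminating: there is no infinite reduction sequence. -/
def Terminating (R : Set (Tm σ ar × Tm σ ar)) : Prop :=
  ¬ ∃ f : ℕ → Tm σ ar, ∀ n, Step R (f n) (f (n + 1))

/-- `R` is confluent. -/
def Confluent (R : Set (Tm σ ar × Tm σ ar)) : Prop :=
  ∀ a b c, Steps R a b → Steps R a c → ∃ d, Steps R b d ∧ Steps R c d

/-- `u` is an `R`-normal form of `t`. -/
def NormalFormOf (R : Set (Tm σ ar × Tm σ ar)) (t u : Tm σ ar) : Prop :=
  Steps R t u ∧ ¬ ∃ v, Step R u v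

/-- The term is a variable. -/
def IsVarTm (t : Tm σ ar) : Prop := ∃ n, t = Tm.var n

/-- Every left-hand side is linear. -/
def LeftLinearTRS (R : Set (Tm σ ar × Tm σ ar)) : Prop :=
  ∀ lr ∈ R, lr.1.Linear

/-- All left- and right-hand sides are linear. -/
def LinearTRS (R : Set (Tm σ ar × Tm σ ar)) : Prop :=
  ∀ lr ∈ R, lr.1.Linear ∧ lr.2.Linear

/-- No rule has a variable as left-hand side or as right-hand side. -/
def CollapseFree (R : Set (Tm σ ar × Tm σ ar)) : Prop :=
  ∀ lr ∈ R, ¬ IsVarTm lr.1 ∧ ¬ IsVarTm lr.2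

/-- Transport of a rule set along an arity-preserving renaming of the alphabet. -/
def mapRules (ι : σ → γ) (h : ∀ s, arγ (ι s) = ar s) (R : Set (Tm σ ar × Tm σ ar)) :
    Set (Tm γ arγ × Tm γ arγ) :=
  (fun lr => (lr.1.map ι h, lr.2.map ι h)) '' R

end Rewriting

/-- A bottom-up tree automaton over `(σ, ar)` with state type `Q`:
transition rules `δ(q₁,…,qₙ) → q`, λ-rules `q → q'`, and final states. -/
structure BTA (σ : Type) (ar : σ → ℕ) (Q : Type) where
  trans : ∀ f : σ, (Fin (ar f) → Q) → Q → Prop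
  eps : Q → Q → Prop
  final : Q → Prop

namespace BTA

variable {σ : Type} {ar : σ → ℕ} {Q : Type}

/-- `t →* q`: the (ground) term `t` can be rewritten to the state `q`. -/
inductive Reach (A : BTA σ ar Q) : Tm σ ar → Q → Prop
  | app {f : σ} {ts : Fin (ar f) → Tm σ ar} {qs : Fin (ar f) → Q} {q : Q} :
      (∀ i, Reach A (ts i) (qs i)) → A.trans f qs q → Reach A (Tm.app f ts) q
  | eps {t : Tm σ ar} {q q' : Q} : Reach A t q → A.eps q q' → Reach A t q'

/-- The tree language recognized by the automaton. -/
def Lang (A : BTA σ ar Q) : Set (Tm σ ar) := {t | ∃ q, A.final q ∧ A.Reach t q}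

end BTA

/-- A tree language is recognizable if some bottom-up tree automaton with a
finite state set recognizes it. -/
def Recognizable {σ : Type} {ar : σ → ℕ} (L : Set (Tm σ ar)) : Prop :=
  ∃ (Q : Type) (_ : Finite Q) (A : BTA σ ar Q), A.Lang = L

/-- `R` (a TRS over all of `σ`, thought of as `sign(R)`) preserves
recognizability of finite tree languages: for every ranked alphabet extending
`σ` (i.e. every finite type with an arity-preserving injection from `σ`) and
every finite tree language of ground terms, the descendant set is recognizable. -/
def PRF {σ : Type} {ar : σ → ℕ} (R : Set (Tm σ ar × Tm σ ar)) : Prop :=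
  ∀ (γ : Type) (arγ : γ → ℕ), Finite γ →
    ∀ ι : σ → γ, Function.Injective ι →
      ∀ h : ∀ s, arγ (ι s) = ar s,
        ∀ L : Set (Tm γ arγ), L.Finite → (∀ t ∈ L, t.Ground) →
          Recognizable (Desc (mapRules ι h R) L)

/-- `R` preserves recognizability: as `PRF`, but for arbitrary recognizable
tree languages. -/
def PR {σ : Type} {ar : σ → ℕ} (R : Set (Tm σ ar × Tm σ ar)) : Prop :=
  ∀ (γ : Type) (arγ : γ → ℕ), Finite γ →
    ∀ ι : σ → γ, Function.Injective ι →
      ∀ h : ∀ s, arγ (ι s) = ar s,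
        ∀ L : Set (Tm γ arγ), Recognizable L →
          Recognizable (Desc (mapRules ι h R) L)

/-! ### Statement 5: the murg TRS
`{ ♯ → f(♯), ♯ → ♭, $ → f($), $ → ♭, g(x₁,x₁) → h(x₁,x₁) }` over the alphabet
`{♯(0), $(0), ♭(0), f(1), g(2), h(2)}`. -/

inductive Sg5 : Type
  | sharp | dollar | flat | f | g | h
deriving DecidableEq

instance : Fintype Sg5 :=
  ⟨{.sharp, .dollar, .flat, .f, .g, .h}, by intro x; cases x <;> decide⟩

def ar5 : Sg5 → ℕ
  | .sharp => 0
  | .dollar => 0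
  | .flat => 0
  | .f => 1
  | .g => 2
  | .h => 2

def sharp5 : Tm Sg5 ar5 := .app .sharp ![]
def dollar5 : Tm Sg5 ar5 := .app .dollar ![]
def flat5 : Tm Sg5 ar5 := .app .flat ![]
def f5 (t : Tm Sg5 ar5) : Tm Sg5 ar5 := .app .f ![t]
def g5 (a b : Tm Sg5 ar5) : Tm Sg5 ar5 := .app .g ![a, b]
def h5 (a b : Tm Sg5 ar5) : Tm Sg5 ar5 := .app .h ![a, b]

def R5 : Set (Tm Sg5 ar5 × Tm Sg5 ar5) :=
  {(sharp5, f5 sharp5), (sharp5, flat5), (dollar5, f5 dollar5), (dollar5, flat5),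
   (g5 (.var 0) (.var 0), h5 (.var 0) (.var 0))}

/-!
Every descendant of `g(♯, $)` is either `g(a, b)` with `♯ →* a` and `$ →* b`, or an `h`-term
created by the non-left-linear rule, which requires `a = b`. Since `♯` only reduces to the
`fᵏ(♯)` and `fᵏ(♭)`, and `$` to the `fᵏ($)` and `fᵏ(♭)`, the common reducts are the irreducible
terms `fᵏ(♭)`; so the `h`-terms among the descendants are exactly the `h(fᵏ(♭), fᵏ(♭))`.
A finite automaton accepting all of these sends the arguments of two of them, `k = n` and
`k = m ≠ n`, to the same pair of states, and hence also accepts `h(fⁿ(♭), fᵐ(♭))`.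
-/

open Function

namespace Tm

variable {σ : Type} {ar : σ → ℕ}

theorem subst_eq_self_of_ground (θ : ℕ → Tm σ ar) : ∀ {t : Tm σ ar}, t.Ground → t.subst θ = t
  | var _, h => h.elim
  | app f ts, h => by
    simp only [subst, app.injEq, heq_eq_eq, true_and]
    exact funext fun i => subst_eq_self_of_ground θ (h i)

end Tm

section Rewriting

variable {σ : Type} {ar : σ → ℕ} {R : Set (Tm σ ar × Tm σ ar)}

theorem Step.of_ground {l r : Tm σ ar} (h : (l, r) ∈ R) (hl : l.Ground) (hr : r.Ground) :
    Step R l r := by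
  simpa only [Tm.subst_eq_self_of_ground _ hl, Tm.subst_eq_self_of_ground _ hr] using
    Step.rule (fun _ => l) h

theorem Step.app_congr {f : σ} {ts ts' : Fin (ar f) → Tm σ ar} (i : Fin (ar f))
    (h : Step R (ts i) (ts' i)) (hts : ∀ j ≠ i, ts' j = ts j) :
    Step R (Tm.app f ts) (Tm.app f ts') := by
  rw [eq_update_iff.2 ⟨rfl, hts⟩]
  exact Step.congr i h

theorem Step.app_inv {f : σ} {ts : Fin (ar f) → Tm σ ar} {u : Tm σ ar}
    (h : Step R (Tm.app f ts) u) :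
    (∃ l r θ, (l, r) ∈ R ∧ l.subst θ = Tm.app f ts ∧ u = r.subst θ) ∨
      ∃ i t', Step R (ts i) t' ∧ u = Tm.app f (update ts i t') := by
  generalize hq : Tm.app f ts = q at h
  cases h with
  | rule θ hlr => exact Or.inl ⟨_, _, θ, hlr, rfl, rfl⟩
  | congr i hs =>
    cases hq
    exact Or.inr ⟨i, _, hs, rfl⟩

theorem desc_subset_of_step_mem {L S : Set (Tm σ ar)} (hL : L ⊆ S)
    (hS : ∀ t ∈ S, ∀ u, Step R t u → u ∈ S) : Desc R L ⊆ S := by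
  rintro _ ⟨q, hq, hsteps⟩
  induction hsteps with
  | refl => exact hL hq
  | tail _ hstep ih => exact hS _ ih _ hstep

end Rewriting

namespace BTA

variable {σ : Type} {ar : σ → ℕ} {Q : Type} {A : BTA σ ar Q}

theorem Reach.exists_arg_states {f : σ} {ts : Fin (ar f) → Tm σ ar} {q : Q}
    (h : A.Reach (Tm.app f ts) q) : ∃ qs : Fin (ar f) → Q, (∀ i, A.Reach (ts i) (qs i)) ∧
      ∀ vs : Fin (ar f) → Tm σ ar, (∀ i, A.Reach (vs i) (qs i)) → A.Reach (Tm.app f vs) q := by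
  generalize hq : Tm.app f ts = t at h
  induction h with
  | app hts htrans =>
    cases hq
    exact ⟨_, hts, fun _ hvs => Reach.app hvs htrans⟩
  | eps _ heps ih =>
    obtain ⟨qs, hts, hvs⟩ := ih hq
    exact ⟨qs, hts, fun vs h => (hvs vs h).eps heps⟩

end BTA

theorem Recognizable.exists_ne_mix_mem {σ : Type} {ar : σ → ℕ} {L : Set (Tm σ ar)}
    (hL : Recognizable L) (s : σ) (ts : ℕ → Fin (ar s) → Tm σ ar)
    (hts : ∀ n, Tm.app s (ts n) ∈ L) :
    ∃ n m, n ≠ m ∧ ∀ vs : Fin (ar s) → Tm σ ar,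
      (∀ i, vs i = ts n i ∨ vs i = ts m i) → Tm.app s vs ∈ L := by
  obtain ⟨Q, hQ, A, rfl⟩ := hL
  choose qf hfinal hreach using hts
  choose qs hqs hmix using fun n => (hreach n).exists_arg_states
  obtain ⟨n, m, hne, heq⟩ := Finite.exists_ne_map_eq_of_infinite qs
  refine ⟨n, m, hne, fun vs hvs => ⟨qf n, hfinal n, hmix n vs fun i => ?_⟩⟩
  rcases hvs i with h | h
  · exact h ▸ hqs n i
  · exact h ▸ heq ▸ hqs m i

theorem f5_injective : Injective f5 := fun _ _ h =>
  congrFun (eq_of_heq (Tm.app.inj h).2) 0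

theorem g5_inj {a b a' b' : Tm Sg5 ar5} (h : g5 a b = g5 a' b') : a = a' ∧ b = b' :=
  have hab := eq_of_heq (Tm.app.inj h).2
  ⟨congrFun hab 0, congrFun hab 1⟩

theorem h5_inj {a b a' b' : Tm Sg5 ar5} (h : h5 a b = h5 a' b') : a = a' ∧ b = b' :=
  have hab := eq_of_heq (Tm.app.inj h).2
  ⟨congrFun hab 0, congrFun hab 1⟩

theorem subst_f5 (θ : ℕ → Tm Sg5 ar5) (t : Tm Sg5 ar5) : (f5 t).subst θ = f5 (t.subst θ) := by
  show Tm.app _ _ = Tm.app _ _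
  congr 1; funext i; fin_cases i; rfl

theorem subst_g5 (θ : ℕ → Tm Sg5 ar5) (a b : Tm Sg5 ar5) :
    (g5 a b).subst θ = g5 (a.subst θ) (b.subst θ) := by
  show Tm.app _ _ = Tm.app _ _
  congr 1; funext i; fin_cases i <;> rfl

theorem subst_h5 (θ : ℕ → Tm Sg5 ar5) (a b : Tm Sg5 ar5) :
    (h5 a b).subst θ = h5 (a.subst θ) (b.subst θ) := by
  show Tm.app _ _ = Tm.app _ _
  congr 1; funext i; fin_cases i <;> rfl

theorem ground_f5 {t : Tm Sg5 ar5} (h : t.Ground) : (f5 t).Ground := fun i => by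
  fin_cases i; exact h

theorem ground_iterate_f5_flat5 (k : ℕ) : (f5^[k] flat5).Ground := by
  induction k with
  | zero => exact fun i => i.elim0
  | succ k ih => exact (iterate_succ_apply' ..).symm ▸ ground_f5 ih

theorem iterate_f5_inj {c d : Tm Sg5 ar5} (hc : ∀ t, c ≠ f5 t) (hd : ∀ t, d ≠ f5 t) :
    ∀ {k j : ℕ}, f5^[k] c = f5^[j] d → k = j ∧ c = d
  | 0, 0, h => ⟨rfl, h⟩
  | 0, j + 1, h => (hc _ (h.trans (iterate_succ_apply' ..))).elim
  | k + 1, 0, h => (hd _ (h.symm.trans (iterate_succ_apply' ..))).elim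
  | k + 1, j + 1, h => by
    rw [iterate_succ_apply', iterate_succ_apply'] at h
    obtain ⟨rfl, rfl⟩ := iterate_f5_inj hc hd (f5_injective h)
    exact ⟨rfl, rfl⟩

theorem iterate_f5_flat5_injective : Injective fun k => f5^[k] flat5 := fun _ _ h =>
  (iterate_f5_inj (c := flat5) (d := flat5) (fun _ => nofun) (fun _ => nofun) h).1

theorem subst_of_mem_R5 {l r : Tm Sg5 ar5} (θ : ℕ → Tm Sg5 ar5) (h : (l, r) ∈ R5) :
    (l.subst θ = sharp5 ∧ (r.subst θ = f5 sharp5 ∨ r.subst θ = flat5)) ∨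
    (l.subst θ = dollar5 ∧ (r.subst θ = f5 dollar5 ∨ r.subst θ = flat5)) ∨
    (l.subst θ = g5 (θ 0) (θ 0) ∧ r.subst θ = h5 (θ 0) (θ 0)) := by
  have hsharp : sharp5.Ground := fun i => i.elim0
  have hdollar : dollar5.Ground := fun i => i.elim0
  have hflat : flat5.Ground := fun i => i.elim0
  simp only [R5, Set.mem_insert_iff, Set.mem_singleton_iff, Prod.mk.injEq] at h
  rcases h with ⟨rfl, rfl⟩ | ⟨rfl, rfl⟩ | ⟨rfl, rfl⟩ | ⟨rfl, rfl⟩ | ⟨rfl, rfl⟩ <;>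
    simp [Tm.subst_eq_self_of_ground, subst_f5, subst_g5, subst_h5, Tm.subst, *]

theorem step_f5 {t t' : Tm Sg5 ar5} (h : Step R5 t t') : Step R5 (f5 t) (f5 t') :=
  Step.app_congr (R := R5) (f := .f) (ts := ![t]) (ts' := ![t']) (0 : Fin 1) h
    fun j hj => (hj (Fin.fin_one_eq_zero j)).elim

theorem step_g5_left {a a' b : Tm Sg5 ar5} (h : Step R5 a a') : Step R5 (g5 a b) (g5 a' b) :=
  Step.app_congr (R := R5) (f := .g) (ts := ![a, b]) (ts' := ![a', b]) (0 : Fin 2) h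
    fun j hj => by fin_cases j; exacts [absurd rfl hj, rfl]

theorem step_g5_right {a b b' : Tm Sg5 ar5} (h : Step R5 b b') : Step R5 (g5 a b) (g5 a b') :=
  Step.app_congr (R := R5) (f := .g) (ts := ![a, b]) (ts' := ![a, b']) (1 : Fin 2) h
    fun j hj => by fin_cases j; exacts [rfl, absurd rfl hj]

theorem step_g5_self (a : Tm Sg5 ar5) : Step R5 (g5 a a) (h5 a a) := by
  have := Step.rule (R := R5) (l := g5 (.var 0) (.var 0)) (r := h5 (.var 0) (.var 0))
    (fun _ => a) (by simp [R5])
  rwa [subst_g5, subst_h5] at this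

theorem step_f5_inv {t u : Tm Sg5 ar5} (h : Step R5 (f5 t) u) :
    ∃ t', Step R5 t t' ∧ u = f5 t' := by
  rcases Step.app_inv h with ⟨l, r, θ, hlr, hl, -⟩ | ⟨i, t', hs, rfl⟩
  · rcases subst_of_mem_R5 θ hlr with ⟨h', -⟩ | ⟨h', -⟩ | ⟨h', -⟩ <;> cases h'.symm.trans hl
  · fin_cases i
    exact ⟨t', hs, congrArg _ (funext fun j => by fin_cases j; rfl)⟩

theorem not_step_flat5 {u : Tm Sg5 ar5} : ¬ Step R5 flat5 u := fun h => by
  rcases Step.app_inv h with ⟨l, r, θ, hlr, hl, -⟩ | ⟨i, -⟩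
  · rcases subst_of_mem_R5 θ hlr with ⟨h', -⟩ | ⟨h', -⟩ | ⟨h', -⟩ <;> cases h'.symm.trans hl
  · exact i.elim0

theorem step_iff_of_eq_sharp5_or_eq_dollar5 {c u : Tm Sg5 ar5} (hc : c = sharp5 ∨ c = dollar5) :
    Step R5 c u ↔ u = f5 c ∨ u = flat5 := by
  have hground : c.Ground := by rcases hc with rfl | rfl <;> exact fun i => i.elim0
  refine ⟨fun h => ?_, ?_⟩
  · rcases hc with rfl | rfl <;>
    rcases Step.app_inv h with ⟨l, r, θ, hlr, hl, rfl⟩ | ⟨i, -⟩ <;>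
    first
    | exact i.elim0
    | rcases subst_of_mem_R5 θ hlr with ⟨h', hr⟩ | ⟨h', hr⟩ | ⟨h', -⟩ <;>
      first
      | exact hr
      | cases h'.symm.trans hl
  · have hrule : (c, f5 c) ∈ R5 ∧ (c, flat5) ∈ R5 := by rcases hc with rfl | rfl <;> simp [R5]
    rintro (rfl | rfl)
    · exact Step.of_ground hrule.1 hground (ground_f5 hground)
    · exact Step.of_ground hrule.2 hground fun i => i.elim0

theorem step_g5_inv {a b u : Tm Sg5 ar5} (h : Step R5 (g5 a b) u) :
    (a = b ∧ u = h5 a a) ∨ (∃ a', Step R5 a a' ∧ u = g5 a' b) ∨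
      ∃ b', Step R5 b b' ∧ u = g5 a b' := by
  rcases Step.app_inv h with ⟨l, r, θ, hlr, hl, rfl⟩ | ⟨i, t', hs, rfl⟩
  · rcases subst_of_mem_R5 θ hlr with ⟨h', -⟩ | ⟨h', -⟩ | ⟨h', hr⟩
    · cases h'.symm.trans hl
    · cases h'.symm.trans hl
    · obtain ⟨rfl, rfl⟩ := g5_inj (h'.symm.trans hl)
      exact .inl ⟨rfl, hr⟩
  · fin_cases i
    · exact .inr (.inl ⟨t', hs, congrArg _ (funext fun j => by fin_cases j <;> rfl)⟩)
    · exact .inr (.inr ⟨t', hs, congrArg _ (funext fun j => by fin_cases j <;> rfl)⟩)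

theorem step_h5_inv {a b u : Tm Sg5 ar5} (h : Step R5 (h5 a b) u) :
    (∃ a', Step R5 a a' ∧ u = h5 a' b) ∨ ∃ b', Step R5 b b' ∧ u = h5 a b' := by
  rcases Step.app_inv h with ⟨l, r, θ, hlr, hl, -⟩ | ⟨i, t', hs, rfl⟩
  · rcases subst_of_mem_R5 θ hlr with ⟨h', -⟩ | ⟨h', -⟩ | ⟨h', -⟩ <;> cases h'.symm.trans hl
  · fin_cases i
    · exact .inl ⟨t', hs, congrArg _ (funext fun j => by fin_cases j <;> rfl)⟩
    · exact .inr ⟨t', hs, congrArg _ (funext fun j => by fin_cases j <;> rfl)⟩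

theorem step_iterate_f5_inv {c u : Tm Sg5 ar5} :
    ∀ {k : ℕ}, Step R5 (f5^[k] c) u → ∃ c', Step R5 c c' ∧ u = f5^[k] c'
  | 0, h => ⟨u, h, rfl⟩
  | k + 1, h => by
    rw [iterate_succ_apply'] at h
    obtain ⟨t, ht, rfl⟩ := step_f5_inv h
    obtain ⟨c', hc', rfl⟩ := step_iterate_f5_inv ht
    exact ⟨c', hc', (iterate_succ_apply' ..).symm⟩

theorem not_step_iterate_f5_flat5 {k : ℕ} {u : Tm Sg5 ar5} : ¬ Step R5 (f5^[k] flat5) u :=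
  fun h => not_step_flat5 (step_iterate_f5_inv h).choose_spec.1

theorem steps_iterate_f5_flat5 {c : Tm Sg5 ar5} (hc : c = sharp5 ∨ c = dollar5) :
    ∀ k, Steps R5 c (f5^[k] flat5)
  | 0 => .single ((step_iff_of_eq_sharp5_or_eq_dollar5 hc).2 (.inr rfl))
  | k + 1 => by
    rw [iterate_succ_apply']
    exact .head ((step_iff_of_eq_sharp5_or_eq_dollar5 hc).2 (.inl rfl))
      ((steps_iterate_f5_flat5 hc k).lift f5 fun _ _ => step_f5)

theorem exists_eq_iterate_f5_of_steps {c a : Tm Sg5 ar5} (hc : c = sharp5 ∨ c = dollar5)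
    (h : Steps R5 c a) : ∃ k, a = f5^[k] c ∨ a = f5^[k] flat5 := by
  induction h with
  | refl => exact ⟨0, .inl rfl⟩
  | tail _ hstep ih =>
    obtain ⟨k, rfl | rfl⟩ := ih
    · obtain ⟨c', hc', rfl⟩ := step_iterate_f5_inv hstep
      rcases (step_iff_of_eq_sharp5_or_eq_dollar5 hc).1 hc' with rfl | rfl
      · exact ⟨k + 1, .inl (iterate_succ_apply ..)⟩
      · exact ⟨k, .inr rfl⟩
    · exact (not_step_iterate_f5_flat5 hstep).elim

theorem exists_eq_iterate_f5_flat5_of_steps_sharp5_dollar5 {a : Tm Sg5 ar5}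
    (hsharp : Steps R5 sharp5 a) (hdollar : Steps R5 dollar5 a) : ∃ k, a = f5^[k] flat5 := by
  have hsharp5 : ∀ t, sharp5 ≠ f5 t := fun _ => nofun
  obtain ⟨k, rfl | rfl⟩ := exists_eq_iterate_f5_of_steps (.inl rfl) hsharp
  · obtain ⟨j, h | h⟩ := exists_eq_iterate_f5_of_steps (.inr rfl) hdollar
    · cases (iterate_f5_inj hsharp5 (d := dollar5) (fun _ => nofun) h).2
    · cases (iterate_f5_inj hsharp5 (d := flat5) (fun _ => nofun) h).2
  · exact ⟨k, rfl⟩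

theorem h5_iterate_f5_flat5_mem_desc (k : ℕ) :
    h5 (f5^[k] flat5) (f5^[k] flat5) ∈ Desc R5 {g5 sharp5 dollar5} := by
  refine ⟨_, rfl, ?_⟩
  have hleft := (steps_iterate_f5_flat5 (.inl rfl) k).lift (g5 · dollar5) fun _ _ => step_g5_left
  have hright := (steps_iterate_f5_flat5 (.inr rfl) k).lift (g5 (f5^[k] flat5)) fun _ _ =>
    step_g5_right
  exact (hleft.trans hright).tail (step_g5_self _)

theorem desc_g5_sharp5_dollar5_subset :
    Desc R5 {g5 sharp5 dollar5} ⊆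
      {t | (∃ a b, Steps R5 sharp5 a ∧ Steps R5 dollar5 b ∧ t = g5 a b) ∨
        ∃ k, t = h5 (f5^[k] flat5) (f5^[k] flat5)} := by
  refine desc_subset_of_step_mem ?_ ?_
  · rintro _ rfl
    exact .inl ⟨_, _, .refl, .refl, rfl⟩
  · rintro _ (⟨a, b, ha, hb, rfl⟩ | ⟨k, rfl⟩) u hu
    · rcases step_g5_inv hu with ⟨rfl, rfl⟩ | ⟨a', ha', rfl⟩ | ⟨b', hb', rfl⟩
      · obtain ⟨k, rfl⟩ := exists_eq_iterate_f5_flat5_of_steps_sharp5_dollar5 ha hb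
        exact .inr ⟨k, rfl⟩
      · exact .inl ⟨a', b, ha.tail ha', hb, rfl⟩
      · exact .inl ⟨a, b', ha, hb.tail hb', rfl⟩
    · rcases step_h5_inv hu with ⟨_, h, -⟩ | ⟨_, h, -⟩ <;> exact (not_step_iterate_f5_flat5 h).elim

theorem desc_g5_sharp5_dollar5_inter_ground_h5 :
    Desc R5 {g5 sharp5 dollar5} ∩
        {t : Tm Sg5 ar5 | ∃ t₁ t₂ : Tm Sg5 ar5, t₁.Ground ∧ t₂.Ground ∧ t = h5 t₁ t₂} =
      {t : Tm Sg5 ar5 | ∃ k : ℕ, t = h5 (f5^[k] flat5) (f5^[k] flat5)} := by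
  ext t
  constructor
  · rintro ⟨ht, t₁, t₂, -, -, rfl⟩
    rcases desc_g5_sharp5_dollar5_subset ht with ⟨a, b, -, -, h⟩ | hk
    · cases h
    · exact hk
  · rintro ⟨k, rfl⟩
    exact ⟨h5_iterate_f5_flat5_mem_desc k, _, _, ground_iterate_f5_flat5 k,
      ground_iterate_f5_flat5 k, rfl⟩

theorem not_recognizable_desc_g5_sharp5_dollar5 :
    ¬ Recognizable (Desc R5 {g5 sharp5 dollar5}) := fun hrec => by
  obtain ⟨n, m, hne, hmix⟩ := hrec.exists_ne_mix_mem Sg5.h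
    (fun k => ![f5^[k] flat5, f5^[k] flat5]) h5_iterate_f5_flat5_mem_desc
  have hnm : h5 (f5^[n] flat5) (f5^[m] flat5) ∈ Desc R5 {g5 sharp5 dollar5} :=
    hmix _ fun i => by fin_cases i; exacts [.inl rfl, .inr rfl]
  obtain ⟨j, hj⟩ : h5 (f5^[n] flat5) (f5^[m] flat5) ∈
      {t : Tm Sg5 ar5 | ∃ k : ℕ, t = h5 (f5^[k] flat5) (f5^[k] flat5)} := by
    rw [← desc_g5_sharp5_dollar5_inter_ground_h5]
    exact ⟨hnm, _, _, ground_iterate_f5_flat5 n, ground_iterate_f5_flat5 m, rfl⟩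
  obtain ⟨hn, hm⟩ := h5_inj hj
  exact hne (iterate_f5_flat5_injective (hn.trans hm.symm))

theorem stmt_5 :
    Desc R5 {g5 sharp5 dollar5} ∩
        {t : Tm Sg5 ar5 | ∃ t₁ t₂ : Tm Sg5 ar5, t₁.Ground ∧ t₂.Ground ∧ t = h5 t₁ t₂} =
      {t : Tm Sg5 ar5 | ∃ k : ℕ, t = h5 (f5^[k] flat5) (f5^[k] flat5)} ∧
    ¬ Recognizable (Desc R5 {g5 sharp5 dollar5}) :=
  ⟨desc_g5_sharp5_dollar5_inter_ground_h5, not_recognizable_desc_g5_sharp5_dollar5⟩
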